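/- Let ℓ ≥ 0 and n ≥ 1 be integers and let q be a rational number. If q is an ℓ-step relation number, then both q/n and −q/n are ℓ-step relation numbers. -/

import Mathlib

/-- `a = [[1,0],[1,1]]` as an element of `SL(2, ℂ)`. -/
def matA : Matrix.SpecialLinearGroup (Fin 2) ℂ :=
  ⟨!![1, 0; 1, 1], by simp [Matrix.det_fin_two_of]⟩

/-- `b_q = [[1,q],[0,1]]` as an element of `SL(2, ℂ)`. -/
def matB (q : ℂ) : Matrix.SpecialLinearGroup (Fin 2) ℂ :=
  ⟨!![1, q; 0, 1], by simp [Matrix.det_fin_two_of]⟩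

/-- `q` is a relation number: the homomorphism `F₂ → SL(2,ℂ)`, `x ↦ a`, `y ↦ b_q`,
is not injective. -/
def IsRelationNumber (q : ℂ) : Prop :=
  ¬ Function.Injective
    (FreeGroup.lift (fun i : Bool => if i then matA else matB q) :
      FreeGroup Bool →* Matrix.SpecialLinearGroup (Fin 2) ℂ)

/-- `q` is an `ℓ`-step relation number: there are `k ≤ ℓ` and nonzero integers
`m_1, …, m_{2k+1}` with `b_q^{m_1} a^{m_2} ⋯ b_q^{m_{2k+1}}` lower triangular. -/
def IsStepRelationNumber (ℓ : ℕ) (q : ℂ) : Prop :=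
  ∃ k : ℕ, k ≤ ℓ ∧ ∃ m : Fin (2 * k + 1) → ℤ, (∀ i, m i ≠ 0) ∧
    ((List.ofFn (fun i : Fin (2 * k + 1) =>
      (if (i : ℕ) % 2 = 0 then matB q else matA) ^ (m i))).prod).val 0 1 = 0

/-- The residue class `w + smℤ` is `s`-good with good representative `w`. -/
def IsGoodRep (s w m : ℤ) : Prop :=
  ∃ y : ℤ, y * (Int.gcd w (s * m) : ℤ) ∣ m * (Int.gcd w s : ℤ) ∧
    (w ∣ s * m * y + (Int.gcd w (s * m) : ℤ) ∨ w ∣ s * m * y - (Int.gcd w (s * m) : ℤ))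


lemma matB_mul (x y : ℂ) : matB x * matB y = matB (x + y) := by
  apply Subtype.ext
  show (matB x).val * (matB y).val = _
  simp only [matB]
  ext i j
  fin_cases i <;> fin_cases j <;>
    simp [Matrix.mul_apply, Fin.sum_univ_two] <;> ring

def matBHom : Multiplicative ℂ →* Matrix.SpecialLinearGroup (Fin 2) ℂ where
  toFun x := matB x.toAdd
  map_one' := by
    apply Subtype.ext
    show (matB 0).val = 1
    simp [matB]
    ext i j; fin_cases i <;> fin_cases j <;> simp
  map_mul' x y := by
    rw [matB_mul]; rfl

lemma matB_zpow (x : ℂ) (t : ℤ) : matB x ^ t = matB (t * x) := by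
  have : matB x = matBHom (Multiplicative.ofAdd x) := rfl
  rw [this, ← map_zpow]
  show matBHom (Multiplicative.ofAdd x ^ t) = _
  rw [← ofAdd_zsmul, zsmul_eq_mul]
  rfl

lemma key (ℓ : ℕ) (q q' : ℂ) (c : ℤ) (hc : c ≠ 0) (hq : (c : ℂ) * q' = q)
    (h : IsStepRelationNumber ℓ q) : IsStepRelationNumber ℓ q' := by
  obtain ⟨k, hk, m, hm, hprod⟩ := h
  refine ⟨k, hk, fun i => if (i : ℕ) % 2 = 0 then c * m i else m i, ?_, ?_⟩
  · intro i
    dsimp only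
    split <;> [exact mul_ne_zero hc (hm i); exact hm i]
  · have : (List.ofFn (fun i : Fin (2 * k + 1) =>
        (if (i : ℕ) % 2 = 0 then matB q' else matA) ^
          (if (i : ℕ) % 2 = 0 then c * m i else m i))) =
        (List.ofFn (fun i : Fin (2 * k + 1) =>
        (if (i : ℕ) % 2 = 0 then matB q else matA) ^ (m i))) := by
      congr 1
      funext i
      by_cases hi : (i : ℕ) % 2 = 0
      · simp only [hi, if_pos]
        rw [matB_zpow, matB_zpow]
        congr 1
        push_cast
        rw [mul_comm ((c:ℂ)) _, mul_assoc, hq]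
      · simp only [hi, if_neg, if_false]
    simpa only [this] using hprod

theorem stmt7 (ℓ : ℕ) (n : ℕ) (hn : 1 ≤ n) (q : ℚ)
    (h : IsStepRelationNumber ℓ (q : ℂ)) :
    IsStepRelationNumber ℓ (((q / (n : ℚ) : ℚ) : ℂ)) ∧
      IsStepRelationNumber ℓ (((-(q / (n : ℚ)) : ℚ) : ℂ)) := by
  have hn0 : (n : ℂ) ≠ 0 := Nat.cast_ne_zero.mpr (by omega)
  constructor
  · refine key ℓ _ _ (n : ℤ) (by exact_mod_cast (by omega : n ≠ 0)) ?_ h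
    push_cast
    field_simp
  · refine key ℓ _ _ (-(n : ℤ)) (by simp; omega) ?_ h
    push_cast
    field_simp
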